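/- arXiv:2104.09803 — 8 statements merged into one kernel-verified Lean document; each statement's English description precedes it below -/
import Mathlib

section
/- Let ε > 0 and α ∈ (0,1] be real numbers, and let P, O, O', A, Δ, φ be real numbers with P > 0. Assume φ ≤ O + O' (migration cost of a repacking is at most the sum of the optimal profits before and after a phase), O' ≤ O + A (the optimum grows by at most the total profit A of arrived items), A ≤ Δ (arrived profit is at most the migration potential), α·O ≤ P (the stored solution is an α-approximation), and Δ > ε·P (a repacking is triggered only once the migration potential exceeds ε times the stored profit). Then φ/Δ < 2/(α·ε) + 1. -/
theorem stmt_0 (ε α P O O' A Δ φ : ℝ)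
    (hε : 0 < ε) (hα0 : 0 < α) (hα1 : α ≤ 1) (hP : 0 < P)
    (h1 : φ ≤ O + O') (h2 : O' ≤ O + A) (h3 : A ≤ Δ)
    (h4 : α * O ≤ P) (h5 : Δ > ε * P) :
    φ / Δ < 2 / (α * ε) + 1 := by
  have hΔ : 0 < Δ := lt_trans (by positivity) h5
  rw [div_lt_iff₀ hΔ]
  have hαε : 0 < α * ε := by positivity
  have key : 2 / (α * ε) * (ε * P) < 2 / (α * ε) * Δ := by
    apply mul_lt_mul_of_pos_left h5 (by positivity)
  have e1 : 2 / (α * ε) * (ε * P) = 2 * P / α := by field_simp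
  rw [e1] at key
  have hO : O ≤ P / α := by rw [le_div_iff₀ hα0]; linarith [mul_comm O α]
  have : φ ≤ 2 * P / α + Δ := by
    have : 2 * O ≤ 2 * P / α := by
      rw [mul_div_assoc]; linarith
    linarith
  linarith [key]
end

section
/- Let ε ∈ (0,1) and α ∈ (0,1] be real numbers, and let P, P', O, O', A, R be real numbers with A ≥ 0, R ≥ 0, and O ≥ 0. Assume P' ≥ P − R (the kept solution loses at most the total profit R of departed items), A + R ≤ ε·P (the accumulated migration potential does not yet exceed ε times the stored profit), P ≥ α·O (the stored solution is an α-approximation of the optimum O at the last repacking time), and O' ≤ O + A (the current optimum exceeds the old optimum by at most the arrived profit A). Then P' ≥ (1−ε)·α·O'. -/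
theorem stmt_1 (ε α P P' O O' A R : ℝ)
    (hε0 : 0 < ε) (hε1 : ε < 1) (hα0 : 0 < α) (hα1 : α ≤ 1)
    (hA : 0 ≤ A) (hR : 0 ≤ R) (hO : 0 ≤ O)
    (h1 : P' ≥ P - R) (h2 : A + R ≤ ε * P)
    (h3 : P ≥ α * O) (h4 : O' ≤ O + A) :
    P' ≥ (1 - ε) * α * O' := by
  have hP0 : 0 ≤ P := by nlinarith
  have hstep : α * O' ≤ α * O + A := by nlinarith
  have hmid : α * O + A ≤ P + (ε * P - R) := by nlinarith
  have hfin : (1 - ε) * (α * O') ≤ (1 - ε) * (P + (ε * P - R)) := by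
    apply mul_le_mul_of_nonneg_left (le_trans hstep hmid) (by linarith)
  have hlast : (1 - ε) * (P + (ε * P - R)) ≤ P - R := by nlinarith
  nlinarith
end

section
/- Let T ≥ 1 be a natural number and define sizes s : ℕ → ℕ by s(1) = 2^(T−1) and s(i) = 3·2^(T−i) for 2 ≤ i ≤ T. Then for every t with 1 ≤ t ≤ T, the sum of s(i) over all i ∈ {1,…,t} with i ≡ t (mod 2) equals 2^T − 2^(T−t). (In particular, for odd t the set of odd-indexed items and for even t the set of even-indexed items among the first t items has total size 2^T − 2^(T−t).) -/
theorem stmt_7 (T : ℕ) (hT : 1 ≤ T) (s : ℕ → ℕ)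
    (hs1 : s 1 = 2 ^ (T - 1))
    (hsi : ∀ i, 2 ≤ i → i ≤ T → s i = 3 * 2 ^ (T - i)) :
    ∀ t, 1 ≤ t → t ≤ T →
      ∑ i ∈ (Finset.Icc 1 t).filter (fun i => i % 2 = t % 2), s i
        = 2 ^ T - 2 ^ (T - t) := by
  intro t
  induction t using Nat.strong_induction_on with
  | _ t ih =>
    intro ht1 htT
    match t, ht1, htT, ih with
    | 1, _, htT, _ =>
      have hset : (Finset.Icc 1 1).filter (fun i => i % 2 = 1 % 2) = {1} := by decide
      rw [hset, Finset.sum_singleton, hs1]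
      have h : 2 ^ T = 2 * 2 ^ (T - 1) := by
        have h' : T - 1 + 1 = T := by omega
        conv_lhs => rw [← h']
        rw [pow_succ]; ring
      omega
    | 2, _, htT, _ =>
      have hset : (Finset.Icc 1 2).filter (fun i => i % 2 = 2 % 2) = {2} := by decide
      rw [hset, Finset.sum_singleton, hsi 2 le_rfl htT]
      have h : 2 ^ T = 4 * 2 ^ (T - 2) := by
        have h' : T - 2 + 2 = T := by omega
        conv_lhs => rw [← h']
        rw [pow_add]; ring
      omega
    | (n+3), _, htT, ih =>
      have hset : (Finset.Icc 1 (n+3)).filter (fun i => i % 2 = (n+3) % 2)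
          = insert (n+3) ((Finset.Icc 1 (n+1)).filter (fun i => i % 2 = (n+1) % 2)) := by
        ext i
        simp only [Finset.mem_filter, Finset.mem_Icc, Finset.mem_insert]
        omega
      rw [hset, Finset.sum_insert (by
        simp only [Finset.mem_filter, Finset.mem_Icc]; omega)]
      rw [ih (n+1) (by omega) (by omega) (by omega), hsi (n+3) (by omega) htT]
      have h1 : 2 ^ (T - (n+1)) = 4 * 2 ^ (T - (n+3)) := by
        have : T - (n+1) = (T - (n+3)) + 2 := by omega
        rw [this, pow_add]; ring
      have h2 : 2 ^ (T - (n+1)) ≤ 2 ^ T :=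
        Nat.pow_le_pow_right (by norm_num) (by omega)
      omega
end

section
/- Let T ≥ 1 be a natural number and define sizes s : ℕ → ℕ by s(1) = 2^(T−1) and s(i) = 3·2^(T−i) for 2 ≤ i ≤ T. Then for every t with 1 ≤ t ≤ T and every subset S ⊆ {1,…,t}: if ∑_{i∈S} s(i) ≤ 2^T, then ∑_{i∈S} s(i) ≤ 2^T − 2^(T−t). -/
theorem stmt_8 (T : ℕ) (hT : 1 ≤ T) (s : ℕ → ℕ)
    (hs1 : s 1 = 2 ^ (T - 1))
    (hsi : ∀ i, 2 ≤ i → i ≤ T → s i = 3 * 2 ^ (T - i)) :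
    ∀ t, 1 ≤ t → t ≤ T → ∀ S ⊆ Finset.Icc 1 t,
      (∑ i ∈ S, s i) ≤ 2 ^ T → (∑ i ∈ S, s i) ≤ 2 ^ T - 2 ^ (T - t) := by
  intro t ht1 htT S hS hle
  have hdvd : 2 ^ (T - t) ∣ ∑ i ∈ S, s i := by
    apply Finset.dvd_sum
    intro i hi
    have hi' := hS hi
    simp only [Finset.mem_Icc] at hi'
    rcases eq_or_lt_of_le hi'.1 with h1 | h2
    · rw [← h1, hs1]
      exact pow_dvd_pow 2 (by omega)
    · rw [hsi i h2 (le_trans hi'.2 htT)]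
      exact Dvd.dvd.mul_left (pow_dvd_pow 2 (by omega)) 3
  have hne : (∑ i ∈ S, s i) ≠ 2 ^ T := by
    intro heq
    have hz : ((∑ i ∈ S, s i : ℕ) : ZMod 3) = ((2 ^ T : ℕ) : ZMod 3) := by rw [heq]
    rw [Nat.cast_sum] at hz
    by_cases h1 : 1 ∈ S
    · rw [← Finset.add_sum_erase _ _ h1] at hz
      have hrest : ∑ i ∈ S.erase 1, ((s i : ℕ) : ZMod 3) = 0 := by
        apply Finset.sum_eq_zero
        intro i hi
        have hi1 : i ≠ 1 := Finset.ne_of_mem_erase hi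
        have hi' := hS (Finset.mem_of_mem_erase hi)
        simp only [Finset.mem_Icc] at hi'
        rw [hsi i (by omega) (by omega)]
        push_cast
        simp [show (3 : ZMod 3) = 0 by decide]
      rw [hrest, add_zero, hs1] at hz
      have hT' : T = (T - 1) + 1 := by omega
      rw [hT'] at hz
      push_cast at hz
      rw [pow_succ] at hz
      have h2 : (2 : ZMod 3) ^ (T - 1) ≠ 0 := pow_ne_zero _ (by decide)
      have hz' : (2 : ZMod 3) ^ (T - 1) * 1 = (2 : ZMod 3) ^ (T - 1) * 2 := by
        rw [mul_one]; exact hz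
      have h12 : (1 : ZMod 3) = 2 := mul_left_cancel₀ h2 hz'
      exact absurd h12 (by decide)
    · have hrest : ∑ i ∈ S, ((s i : ℕ) : ZMod 3) = 0 := by
        apply Finset.sum_eq_zero
        intro i hi
        have hi' := hS hi
        simp only [Finset.mem_Icc] at hi'
        have : i ≠ 1 := fun h => h1 (h ▸ hi)
        rw [hsi i (by omega) (by omega)]
        push_cast
        simp [show (3 : ZMod 3) = 0 by decide]
      rw [hrest] at hz
      push_cast at hz
      have h2 : (2 : ZMod 3) ^ T ≠ 0 := pow_ne_zero _ (by decide)
      exact h2 hz.symm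
  have hd2 : 2 ^ (T - t) ∣ 2 ^ T := pow_dvd_pow 2 (Nat.sub_le T t)
  have hdsub : 2 ^ (T - t) ∣ 2 ^ T - ∑ i ∈ S, s i := Nat.dvd_sub hd2 hdvd
  have hpos : 0 < 2 ^ T - ∑ i ∈ S, s i := by omega
  have := Nat.le_of_dvd hpos hdsub
  omega
end

section
/- Let T ≥ 1 be a natural number and define sizes s : ℕ → ℕ by s(1) = 2^(T−1) and s(i) = 3·2^(T−i) for 2 ≤ i ≤ T. Then for every subset S ⊆ {1,…,T}, the total size ∑_{i∈S} s(i) is not equal to 2^T. -/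
/-! Every size except `s 1 = 2 ^ (T - 1)` is a multiple of three. Without item `1` the total is
a multiple of three; with it, reaching `2 ^ T` would leave `2 ^ T - 2 ^ (T - 1) = 2 ^ (T - 1)` to
the other items. Neither `2 ^ T` nor `2 ^ (T - 1)` is a multiple of three. -/

lemma not_three_dvd_two_pow (n : ℕ) : ¬ 3 ∣ 2 ^ n := fun h => by
  have := Nat.prime_three.dvd_of_dvd_pow h
  omega

lemma three_dvd_sum_erase_one {T : ℕ} {s : ℕ → ℕ}
    (hsi : ∀ i, 2 ≤ i → i ≤ T → s i = 3 * 2 ^ (T - i)) {S : Finset ℕ}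
    (hS : S ⊆ Finset.Icc 1 T) : 3 ∣ ∑ i ∈ S.erase 1, s i :=
  Finset.dvd_sum fun i hi => by
    obtain ⟨hi1, hiS⟩ := Finset.mem_erase.mp hi
    obtain ⟨hle, hiT⟩ := Finset.mem_Icc.mp (hS hiS)
    rw [hsi i (by omega) hiT]
    exact dvd_mul_right 3 _

theorem stmt_9_general (T : ℕ) (s : ℕ → ℕ)
    (hs1 : s 1 = 2 ^ (T - 1))
    (hsi : ∀ i, 2 ≤ i → i ≤ T → s i = 3 * 2 ^ (T - i)) :
    ∀ S ⊆ Finset.Icc 1 T, (∑ i ∈ S, s i) ≠ 2 ^ T := by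
  intro S hS hsum
  obtain ⟨k, hk⟩ := three_dvd_sum_erase_one hsi hS
  by_cases h1 : 1 ∈ S
  · have hT : 2 ^ T = 2 ^ (T - 1) + 2 ^ (T - 1) := by
      have : 1 ≤ T := (Finset.mem_Icc.mp (hS h1)).2
      rw [← two_mul, ← pow_succ', Nat.sub_add_cancel this]
    rw [← Finset.add_sum_erase S s h1, hs1, hk] at hsum
    exact not_three_dvd_two_pow (T - 1) ⟨k, by omega⟩
  · rw [Finset.erase_eq_of_notMem h1, hsum] at hk
    exact not_three_dvd_two_pow T ⟨k, hk⟩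

theorem stmt_9 (T : ℕ) (hT : 1 ≤ T) (s : ℕ → ℕ)
    (hs1 : s 1 = 2 ^ (T - 1))
    (hsi : ∀ i, 2 ≤ i → i ≤ T → s i = 3 * 2 ^ (T - i)) :
    ∀ S ⊆ Finset.Icc 1 T, (∑ i ∈ S, s i) ≠ 2 ^ T :=
  stmt_9_general T s hs1 hsi
end

section
/- Let T ≥ 1 be a natural number and define sizes s : ℕ → ℕ by s(1) = 2^(T−1) and s(i) = 3·2^(T−i) for 2 ≤ i ≤ T. Then for every t with 1 ≤ t ≤ T, the only subset S ⊆ {1,…,t} with ∑_{i∈S} s(i) = 2^T − 2^(T−t) is the set { i ∈ {1,…,t} : i ≡ t (mod 2) }. -/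
/-!
Write `d = 2 ^ (T - t)`. Every size of index below `t` is a multiple of `2d`, so reading the
target `2 ^ T - d` modulo `2d` forces `t ∈ S`. Every size of index below `t - 1` is a multiple
of `4d`, whereas `s (t - 1)` is `2d` or `6d` and `s t + d = 4d`, so reading it modulo `4d` forces
`t - 1 ∉ S`. Removing `t` from `S` then leaves a solution for the target of `t - 2`, and induction
on `t` concludes.
-/

open Finset

structure HardInstance (T : ℕ) (s : ℕ → ℕ) : Prop where
  size_one : s 1 = 2 ^ (T - 1)
  size_of_two_le : ∀ i, 2 ≤ i → i ≤ T → s i = 3 * 2 ^ (T - i)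

def alternatingIndices (t : ℕ) : Finset ℕ := (Icc 1 t).filter (fun i => i % 2 = t % 2)

lemma alternatingIndices_eq_insert {t : ℕ} (ht : 1 ≤ t) :
    alternatingIndices t = insert t (alternatingIndices (t - 2)) := by
  ext i
  simp only [alternatingIndices, mem_filter, mem_Icc, mem_insert]
  omega

lemma alternatingIndices_subset_Icc (t : ℕ) : alternatingIndices t ⊆ Icc 1 t :=
  filter_subset _ _

lemma notMem_alternatingIndices_sub_two (t : ℕ) : t ∉ alternatingIndices (t - 2) := fun h => by
  have := mem_Icc.mp (alternatingIndices_subset_Icc _ h)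
  omega

lemma two_pow_sub_sub {k t T : ℕ} (hkt : k ≤ t) (htT : t ≤ T) :
    2 ^ (T - (t - k)) = 2 ^ k * 2 ^ (T - t) := by
  rw [← pow_add]
  congr 1
  omega

namespace HardInstance

variable {T : ℕ} {s : ℕ → ℕ}

lemma pow_dvd_sum (h : HardInstance T s) {m : ℕ} (hm : m ≤ T) {S : Finset ℕ}
    (hS : S ⊆ Icc 1 m) : 2 ^ (T - m) ∣ ∑ i ∈ S, s i := by
  refine dvd_sum fun i hi => ?_
  obtain ⟨hi1, him⟩ := mem_Icc.mp (hS hi)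
  obtain rfl | hi2 := hi1.eq_or_lt
  · rw [h.size_one]
    exact pow_dvd_pow 2 (by omega)
  · rw [h.size_of_two_le i hi2 (by omega)]
    exact dvd_mul_of_dvd_right (pow_dvd_pow 2 (by omega)) 3

lemma target_sub_two_add (h : HardInstance T s) {t : ℕ} (ht : 1 ≤ t) (htT : t ≤ T) :
    2 ^ T - 2 ^ (T - (t - 2)) + s t = 2 ^ T - 2 ^ (T - t) := by
  have hle : 2 ^ (T - (t - 2)) ≤ 2 ^ T := Nat.pow_le_pow_right two_pos (by omega)
  obtain rfl | ht2 := ht.eq_or_lt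
  · have h2T : 2 ^ T = 2 * 2 ^ (T - 1) := by rw [← pow_succ']; congr 1; omega
    rw [h.size_one, show 1 - 2 = 0 from rfl, Nat.sub_zero]
    omega
  · rw [two_pow_sub_sub ht2 htT] at hle ⊢
    rw [h.size_of_two_le t ht2 htT]
    omega

lemma sum_alternatingIndices (h : HardInstance T s) {t : ℕ} (htT : t ≤ T) :
    ∑ i ∈ alternatingIndices t, s i = 2 ^ T - 2 ^ (T - t) := by
  induction t using Nat.strong_induction_on with
  | _ t ih =>
    obtain rfl | ht := Nat.eq_zero_or_pos t
    · simp [alternatingIndices]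
    rw [alternatingIndices_eq_insert ht, sum_insert (notMem_alternatingIndices_sub_two t),
      ih (t - 2) (by omega) (by omega), add_comm, h.target_sub_two_add ht htT]

variable {t : ℕ} {S : Finset ℕ}

lemma mem_of_sum_eq (h : HardInstance T s) (ht : 1 ≤ t) (htT : t ≤ T) (hS : S ⊆ Icc 1 t)
    (hsum : ∑ i ∈ S, s i = 2 ^ T - 2 ^ (T - t)) : t ∈ S := by
  by_contra htS
  have hS' : S ⊆ Icc 1 (t - 1) := fun i hi => by
    have := mem_Icc.mp (hS hi)
    have : i ≠ t := fun hit => htS (hit ▸ hi)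
    exact mem_Icc.mpr (by omega)
  set d := 2 ^ (T - t)
  have hd : 0 < d := by positivity
  have hdvd_sum : 2 * d ∣ ∑ i ∈ S, s i :=
    two_pow_sub_sub (k := 1) ht htT ▸ h.pow_dvd_sum (by omega) hS'
  have hdvd_T : 2 * d ∣ 2 ^ T := two_pow_sub_sub (k := 1) ht htT ▸ pow_dvd_pow 2 (by omega)
  have hdT : d ≤ 2 ^ T := Nat.pow_le_pow_right two_pos (by omega)
  have : 2 * d ∣ d := (Nat.dvd_add_right hdvd_sum).mp (by rwa [hsum, Nat.sub_add_cancel hdT])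
  have := Nat.le_of_dvd hd this
  omega

lemma sub_one_notMem_of_sum_eq (h : HardInstance T s) (htT : t ≤ T) (hS : S ⊆ Icc 1 t)
    (hsum : ∑ i ∈ S, s i = 2 ^ T - 2 ^ (T - t)) (htS : t ∈ S) : t - 1 ∉ S := by
  intro ht1S
  have ht2 : 2 ≤ t := by have := mem_Icc.mp (hS ht1S); omega
  set d := 2 ^ (T - t)
  have hd : 0 < d := by positivity
  have hdT : d ≤ 2 ^ T := Nat.pow_le_pow_right two_pos (by omega)
  set R := S \ {t - 1, t}
  have hR : R ⊆ Icc 1 (t - 2) := fun i hi => by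
    simp only [R, mem_sdiff, mem_insert, mem_singleton] at hi
    have := mem_Icc.mp (hS hi.1)
    exact mem_Icc.mpr (by omega)
  have hsplit : ∑ i ∈ R, s i + (s (t - 1) + s t) = ∑ i ∈ S, s i := by
    rw [← sum_pair (by omega : t - 1 ≠ t)]
    exact sum_sdiff (insert_subset ht1S (singleton_subset_iff.mpr htS))
  have hst : s t = 3 * d := h.size_of_two_le t ht2 htT
  have hR_dvd : 4 * d ∣ ∑ i ∈ R, s i :=
    two_pow_sub_sub (k := 2) ht2 htT ▸ h.pow_dvd_sum (by omega) hR
  have hT_dvd : 4 * d ∣ 2 ^ T := two_pow_sub_sub (k := 2) ht2 htT ▸ pow_dvd_pow 2 (by omega)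
  have four_dvd : ∀ c, s (t - 1) = c * d → 4 ∣ c := fun c hc => by
    have heq : ∑ i ∈ R, s i + (c * d + 4 * d) = 2 ^ T := by rw [← hc]; omega
    have : 4 * d ∣ c * d + 4 * d := (Nat.dvd_add_right hR_dvd).mp (heq ▸ hT_dvd)
    exact (Nat.mul_dvd_mul_iff_right hd).mp ((Nat.dvd_add_left (dvd_refl _)).mp this)
  have hd2 : 2 ^ (T - (t - 1)) = 2 * d := two_pow_sub_sub (k := 1) (by omega) htT
  obtain rfl | ht3 := ht2.eq_or_lt
  · have := four_dvd 2 (by rw [← hd2]; exact h.size_one)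
    omega
  · have := four_dvd 6 (by rw [h.size_of_two_le (t - 1) (by omega) (by omega), hd2]; ring)
    omega

lemma eq_alternatingIndices_of_sum_eq (h : HardInstance T s) (htT : t ≤ T) (hS : S ⊆ Icc 1 t)
    (hsum : ∑ i ∈ S, s i = 2 ^ T - 2 ^ (T - t)) : S = alternatingIndices t := by
  induction t using Nat.strong_induction_on generalizing S with
  | _ t ih =>
    obtain rfl | ht := Nat.eq_zero_or_pos t
    · simpa [alternatingIndices] using hS
    have htS := h.mem_of_sum_eq ht htT hS hsum
    have ht1S := h.sub_one_notMem_of_sum_eq htT hS hsum htS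
    have hS' : S.erase t ⊆ Icc 1 (t - 2) := fun i hi => by
      obtain ⟨hit, hiS⟩ := mem_erase.mp hi
      have := mem_Icc.mp (hS hiS)
      have : i ≠ t - 1 := fun h => ht1S (h ▸ hiS)
      exact mem_Icc.mpr (by omega)
    have hsum' : ∑ i ∈ S.erase t, s i = 2 ^ T - 2 ^ (T - (t - 2)) := by
      refine Nat.add_right_cancel (m := s t) ?_
      rw [sum_erase_add S s htS, hsum, h.target_sub_two_add ht htT]
    rw [alternatingIndices_eq_insert ht, ← ih (t - 2) (by omega) (by omega) hS' hsum',
      insert_erase htS]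

end HardInstance

theorem stmt_10_general (T : ℕ) (s : ℕ → ℕ)
    (hs1 : s 1 = 2 ^ (T - 1))
    (hsi : ∀ i, 2 ≤ i → i ≤ T → s i = 3 * 2 ^ (T - i)) :
    ∀ t, 1 ≤ t → t ≤ T → ∀ S ⊆ Finset.Icc 1 t,
      ((∑ i ∈ S, s i) = 2 ^ T - 2 ^ (T - t) ↔
        S = (Finset.Icc 1 t).filter (fun i => i % 2 = t % 2)) := by
  have h : HardInstance T s := ⟨hs1, hsi⟩
  intro t _ htT S hS
  refine ⟨h.eq_alternatingIndices_of_sum_eq htT hS, ?_⟩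
  rintro rfl
  exact h.sum_alternatingIndices htT

theorem stmt_10 (T : ℕ) (hT : 1 ≤ T) (s : ℕ → ℕ)
    (hs1 : s 1 = 2 ^ (T - 1))
    (hsi : ∀ i, 2 ≤ i → i ≤ T → s i = 3 * 2 ^ (T - i)) :
    ∀ t, 1 ≤ t → t ≤ T → ∀ S ⊆ Finset.Icc 1 t,
      ((∑ i ∈ S, s i) = 2 ^ T - 2 ^ (T - t) ↔
        S = (Finset.Icc 1 t).filter (fun i => i % 2 = t % 2)) :=
  stmt_10_general T s hs1 hsi
end

section
/- Let α ∈ (0,1) be a real number and let T, t be natural numbers with 1 ≤ t ≤ T. Then (2^T − 2^(T−t+1) : ℝ) < α·(2^T − 2^(T−t)) if and only if (t : ℝ) < log₂((2−α)/(1−α)). -/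
theorem stmt_11 (α : ℝ) (hα0 : 0 < α) (hα1 : α < 1) (T t : ℕ) (ht : 1 ≤ t) (htT : t ≤ T) :
    (2 : ℝ) ^ T - 2 ^ (T - t + 1) < α * ((2 : ℝ) ^ T - 2 ^ (T - t)) ↔
      (t : ℝ) < Real.logb 2 ((2 - α) / (1 - α)) := by
  have h1 : (2 : ℝ) ^ T = 2 ^ (T - t) * 2 ^ t := by
    rw [← pow_add]; congr 1; omega
  have hpos : (0 : ℝ) < 2 ^ (T - t) := by positivity
  have h1α : (0 : ℝ) < 1 - α := by linarith
  have hq : (0 : ℝ) < (2 - α) / (1 - α) := by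
    apply div_pos <;> linarith
  have key : ((2 : ℝ) ^ T - 2 ^ (T - t + 1) < α * ((2 : ℝ) ^ T - 2 ^ (T - t))) ↔
      (2 : ℝ) ^ t < (2 - α) / (1 - α) := by
    rw [h1, pow_succ]
    rw [lt_div_iff₀ h1α]
    constructor <;> intro h <;> nlinarith
  rw [key, Real.lt_logb_iff_rpow_lt (by norm_num) hq, Real.rpow_natCast]
end

section
/- Let T ≥ 1 be a natural number and define sizes s : ℕ → ℕ by s(1) = 2^(T−1) and s(i) = 3·2^(T−i) for 2 ≤ i ≤ T. Then for every t with 1 ≤ t ≤ T, the maximum of ∑_{i∈S} s(i) over all subsets S ⊆ {1,…,t} satisfying ∑_{i∈S} s(i) ≤ 2^T equals 2^T − 2^(T−t). -/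
lemma aux_mem (T : ℕ) (hT : 1 ≤ T) (s : ℕ → ℕ)
    (hs1 : s 1 = 2 ^ (T - 1))
    (hsi : ∀ i, 2 ≤ i → i ≤ T → s i = 3 * 2 ^ (T - i)) :
    ∀ t, 1 ≤ t → t ≤ T →
      ∃ S ⊆ Finset.Icc 1 t, (∑ i ∈ S, s i) = 2 ^ T - 2 ^ (T - t) := by
  intro t
  induction t using Nat.strong_induction_on with
  | _ t ih =>
    intro h1 hT'
    rcases Nat.lt_or_ge t 3 with h | h
    · interval_cases t
      · refine ⟨{1}, by simp, ?_⟩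
        have h2 : 2 ^ T = 2 ^ (T - 1) * 2 := by
          rw [← pow_succ, Nat.sub_add_cancel hT]
        simp only [Finset.sum_singleton, hs1]
        omega
      · refine ⟨{2}, by simp, ?_⟩
        have h2 : 2 ^ T = 2 ^ (T - 2) * 4 := by
          rw [show (4:ℕ) = 2 ^ 2 from rfl, ← pow_add, Nat.sub_add_cancel hT']
        simp only [Finset.sum_singleton, hsi 2 le_rfl hT']
        omega
    · obtain ⟨S', hsub, hsum⟩ := ih (t - 2) (by omega) (by omega) (by omega)
      have htS' : t ∉ S' := by
        intro hmem
        have := hsub hmem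
        simp [Finset.mem_Icc] at this; omega
      refine ⟨insert t S', ?_, ?_⟩
      · intro x hx
        rcases Finset.mem_insert.mp hx with rfl | hx
        · simp [Finset.mem_Icc]; omega
        · have := hsub hx; simp only [Finset.mem_Icc] at this ⊢; omega
      · rw [Finset.sum_insert htS', hsum, hsi t (by omega) hT']
        have e1 : 2 ^ (T - (t - 2)) = 4 * 2 ^ (T - t) := by
          rw [show T - (t - 2) = T - t + 2 by omega, pow_add]; ring
        have e2 : 2 ^ (T - t) ≤ 2 ^ T := Nat.pow_le_pow_right (by norm_num) (by omega)
        have e3 : 2 ^ (T - (t - 2)) ≤ 2 ^ T := Nat.pow_le_pow_right (by norm_num) (by omega)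
        omega

theorem stmt_19 (T : ℕ) (hT : 1 ≤ T) (s : ℕ → ℕ)
    (hs1 : s 1 = 2 ^ (T - 1))
    (hsi : ∀ i, 2 ≤ i → i ≤ T → s i = 3 * 2 ^ (T - i)) :
    ∀ t, 1 ≤ t → t ≤ T →
      IsGreatest {v : ℕ | ∃ S ⊆ Finset.Icc 1 t, (∑ i ∈ S, s i) ≤ 2 ^ T ∧ v = ∑ i ∈ S, s i}
        (2 ^ T - 2 ^ (T - t)) := by
  intro t h1 ht
  have e2 : 2 ^ (T - t) ≤ 2 ^ T := Nat.pow_le_pow_right (by norm_num) (by omega)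
  constructor
  · obtain ⟨S, hsub, hsum⟩ := aux_mem T hT s hs1 hsi t h1 ht
    exact ⟨S, hsub, by rw [hsum]; exact Nat.sub_le _ _, hsum.symm⟩
  · rintro v ⟨S, hsub, hle, rfl⟩
    have hdvd : 2 ^ (T - t) ∣ ∑ i ∈ S, s i := by
      apply Finset.dvd_sum
      intro i hi
      have hi' := hsub hi
      simp only [Finset.mem_Icc] at hi'
      rcases Nat.lt_or_ge i 2 with h2 | h2
      · have : i = 1 := by omega
        subst this
        rw [hs1]
        exact pow_dvd_pow 2 (by omega)
      · rw [hsi i h2 (by omega)]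
        exact Dvd.dvd.mul_left (pow_dvd_pow 2 (by omega)) 3
    have hne : ∑ i ∈ S, s i ≠ 2 ^ T := by
      intro heq
      have h3 : ∀ k, ¬ (3 ∣ 2 ^ k) := by
        intro k hk
        have hc : Nat.Coprime 3 (2 ^ k) :=
          Nat.Coprime.pow_right k (by decide)
        have := hc.eq_one_of_dvd hk
        omega
      by_cases h1S : 1 ∈ S
      · have hsplit : ∑ i ∈ S, s i = s 1 + ∑ i ∈ S.erase 1, s i := by
          rw [Finset.add_sum_erase _ _ h1S]
        have hd3 : 3 ∣ ∑ i ∈ S.erase 1, s i := by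
          apply Finset.dvd_sum
          intro i hi
          have hi2 := Finset.mem_erase.mp hi
          have hi' := hsub hi2.2
          simp only [Finset.mem_Icc] at hi'
          rw [hsi i (by omega) (by omega)]
          exact Dvd.intro _ rfl
        have h2T : 2 ^ T = 2 ^ (T - 1) * 2 := by
          rw [← pow_succ, Nat.sub_add_cancel hT]
        rw [hs1] at hsplit
        have hrem : ∑ i ∈ S.erase 1, s i = 2 ^ (T - 1) := by omega
        exact h3 (T - 1) (hrem ▸ hd3)
      · have hd3 : 3 ∣ ∑ i ∈ S, s i := by
          apply Finset.dvd_sum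
          intro i hi
          have hi' := hsub hi
          simp only [Finset.mem_Icc] at hi'
          have : i ≠ 1 := fun h => h1S (h ▸ hi)
          rw [hsi i (by omega) (by omega)]
          exact Dvd.intro _ rfl
        exact h3 T (heq ▸ hd3)
    have hdvdT : 2 ^ (T - t) ∣ 2 ^ T := pow_dvd_pow 2 (by omega)
    have : 2 ^ (T - t) ≤ 2 ^ T - ∑ i ∈ S, s i :=
      Nat.le_of_dvd (by omega) (Nat.dvd_sub hdvdT hdvd)
    omega
end
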